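/- arXiv:1503.03820 — 2 statements merged into one kernel-verified Lean document; each statement's English description precedes it below -/
import Mathlib

section
/- If T'' ⊚≺ T' ⊚≺ T are topologies on a finite set X, then T'/T'' ⊚≺ T/T''. -/
variable {X : Type*}

/-- The specialization quasi-order of a topology: `x ≤_T y` iff every
`T`-open set containing `x` contains `y`. -/
def leT (t : TopologicalSpace X) (x y : X) : Prop :=
  ∀ U : Set X, t.IsOpen U → x ∈ U → y ∈ U

/-- The specialization equivalence `∼_T`. -/
def simT (t : TopologicalSpace X) (x y : X) : Prop :=
  leT t x y ∧ leT t y x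

/-- The topology of final segments of a relation `r`. -/
def topOfRel (r : X → X → Prop) : TopologicalSpace X where
  IsOpen U := ∀ x ∈ U, ∀ y, r x y → y ∈ U
  isOpen_univ := fun _ _ y _ => Set.mem_univ y
  isOpen_inter := fun U V hU hV x hx y hr => ⟨hU x hx.1 y hr, hV x hx.2 y hr⟩
  isOpen_sUnion := fun S hS x hx y hr => by
    obtain ⟨U, hU, hxU⟩ := hx
    exact ⟨U, hU, hS U hU x hxU y hr⟩

/-- `T'` is finer than `T`: every `T`-open set is `T'`-open. -/
def finer (t' t : TopologicalSpace X) : Prop :=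
  ∀ U : Set X, t.IsOpen U → t'.IsOpen U

/-- The quasi-order of the quotient topology `T/T'`: the transitive closure of
`x R y ↔ (x ≤_T y or y ≤_{T'} x)`. -/
def quotRel (t t' : TopologicalSpace X) : X → X → Prop :=
  Relation.ReflTransGen (fun x y => leT t x y ∨ leT t' y x)

/-- The quotient topology `T/T'`. -/
def quotTop (t t' : TopologicalSpace X) : TopologicalSpace X :=
  topOfRel (quotRel t t')

/-- Restriction (subspace topology) of `t` to a subset `Y`. -/
def restrictT (t : TopologicalSpace X) (Y : Set X) : TopologicalSpace Y :=
  t.induced Subtype.val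

/-- `T'` is `T`-admissible (`T' ⊚≺ T`). -/
def adm (t' t : TopologicalSpace X) : Prop :=
  finer t' t ∧
  (∀ Y : Set X, @IsConnected X t' Y → restrictT t' Y = restrictT t Y) ∧
  (∀ x y : X,
    (quotRel t t' x y ∧ quotRel t t' y x) ↔ (quotRel t' t' x y ∧ quotRel t' t' y x))

/- ### Auxiliary lemmas -/

lemma rtg_le {r s : X → X → Prop} (h : ∀ x y, r x y → Relation.ReflTransGen s x y) :
    ∀ x y, Relation.ReflTransGen r x y → Relation.ReflTransGen s x y := by
  intro x y hxy
  induction hxy with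
  | refl => exact .refl
  | tail _ hstep ih => exact ih.trans (h _ _ hstep)

lemma rtg_flip {r : X → X → Prop} {x y : X} (h : Relation.ReflTransGen r x y) :
    Relation.ReflTransGen (fun a b => r b a) y x := by
  induction h with
  | refl => exact .refl
  | tail _ hstep ih => exact Relation.ReflTransGen.head hstep ih

lemma rtg_symm {r : X → X → Prop} (hr : ∀ a b, r a b → r b a) {x y : X}
    (h : Relation.ReflTransGen r x y) : Relation.ReflTransGen r y x :=
  rtg_le (fun a b hab => Relation.ReflTransGen.single (hr b a hab)) y x (rtg_flip h)

lemma leT_refl (t : TopologicalSpace X) (x : X) : leT t x x := fun _ _ h => h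

lemma leT_mono {t' t : TopologicalSpace X} (h : finer t' t) {x y : X}
    (hxy : leT t' x y) : leT t x y :=
  fun U hU => hxy U (h U hU)

lemma leT_topOfRel (r : X → X → Prop) (x y : X) :
    leT (topOfRel r) x y ↔ Relation.ReflTransGen r x y := by
  constructor
  · intro h
    exact h {z | Relation.ReflTransGen r x z}
      (fun u hu v hv => Relation.ReflTransGen.tail hu hv) Relation.ReflTransGen.refl
  · intro h U hU hx
    induction h with
    | refl => exact hx
    | tail _ hstep ih => exact hU _ ih _ hstep

lemma leT_quotTop (t t' : TopologicalSpace X) (x y : X) :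
    leT (quotTop t t') x y ↔ quotRel t t' x y := by
  rw [quotTop, leT_topOfRel]
  exact ⟨rtg_le (fun _ _ h => h) x y, fun h => Relation.ReflTransGen.single h⟩

lemma quotRel_self_symm (t' : TopologicalSpace X) {x y : X}
    (h : quotRel t' t' x y) : quotRel t' t' y x :=
  rtg_symm (fun _ _ hab => hab.symm) h

lemma minOpen [Finite X] (t : TopologicalSpace X) (w : X) : t.IsOpen {z | leT t w z} := by
  letI := t
  have : {z | leT t w z} = ⋂₀ {U : Set X | t.IsOpen U ∧ w ∈ U} := by
    ext z
    simp only [Set.mem_setOf_eq, Set.mem_sInter]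
    exact ⟨fun h U hU => h U hU.1 hU.2, fun h U hU hw => h U ⟨hU, hw⟩⟩
  rw [this]
  exact Set.Finite.isOpen_sInter (Set.toFinite _) (fun U hU => hU.1)

lemma restrict_open_iff [Finite X] (t : TopologicalSpace X) (Y : Set X) (V : Set Y) :
    (restrictT t Y).IsOpen V ↔ ∀ v ∈ V, ∀ w : Y, leT t v w → w ∈ V := by
  letI := t
  constructor
  · rintro ⟨U, hU, rfl⟩ v hv w hlw
    exact hlw U hU hv
  · intro hV
    refine ⟨{z | ∃ v : Y, v ∈ V ∧ leT t (v : X) z}, ?_, ?_⟩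
    · have : {z | ∃ v : Y, v ∈ V ∧ leT t (v : X) z} = ⋃ v ∈ V, {z | leT t (v : X) z} := by
        ext z; simp
      rw [this]
      exact isOpen_biUnion (fun v _ => minOpen t (v : X))
    · ext w
      simp only [Set.mem_preimage, Set.mem_setOf_eq]
      exact ⟨fun ⟨v, hv, hl⟩ => hV v hv w hl, fun hw => ⟨w, hw, leT_refl t _⟩⟩

lemma leT_restrict (t : TopologicalSpace X) (Y : Set X) (u w : Y) :
    leT (restrictT t Y) u w ↔ leT t ↑u ↑w := by
  constructor
  · intro h U hU hu
    exact h (Subtype.val ⁻¹' U) ⟨U, hU, rfl⟩ hu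
  · rintro h V ⟨U, hU, rfl⟩ hv
    exact h U hU hv

lemma leT_iff_of_restrict_eq {t₁ t₂ : TopologicalSpace X} {Y : Set X}
    (h : restrictT t₁ Y = restrictT t₂ Y) (u w : Y) :
    leT t₁ ↑u ↑w ↔ leT t₂ ↑u ↑w := by
  rw [← leT_restrict t₁ Y u w, ← leT_restrict t₂ Y u w, h]

lemma restrict_eq_of_leT [Finite X] {t₁ t₂ : TopologicalSpace X} (Y : Set X)
    (h : ∀ u w : Y, leT t₁ ↑u ↑w ↔ leT t₂ ↑u ↑w) :
    restrictT t₁ Y = restrictT t₂ Y := by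
  apply TopologicalSpace.ext
  funext V
  rw [eq_iff_iff]
  show (restrictT t₁ Y).IsOpen V ↔ (restrictT t₂ Y).IsOpen V
  rw [restrict_open_iff, restrict_open_iff]
  exact ⟨fun H v hv w hl => H v hv w ((h v w).mpr hl),
         fun H v hv w hl => H v hv w ((h v w).mp hl)⟩

lemma zigzag_preconnected (t : TopologicalSpace X) (Y : Set X)
    (h : ∀ x ∈ Y, ∀ y ∈ Y, Relation.ReflTransGen
      (fun u v => (u ∈ Y ∧ v ∈ Y) ∧ (leT t u v ∨ leT t v u)) x y) :
    @IsPreconnected X t Y := by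
  letI := t
  rintro U V hU hV hcov ⟨p, hpY, hpU⟩ ⟨q, hqY, hqV⟩
  have key : ∀ z, Relation.ReflTransGen
      (fun u v => (u ∈ Y ∧ v ∈ Y) ∧ (leT t u v ∨ leT t v u)) p z →
      z ∈ U ∨ (Y ∩ (U ∩ V)).Nonempty := by
    intro z hz
    induction hz with
    | refl => exact Or.inl hpU
    | tail _ hstep ih =>
      rcases ih with hbU | done
      · rcases hstep.2 with hbc | hcb
        · exact Or.inl (hbc U hU hbU)
        · rcases hcov hstep.1.2 with hcU | hcV
          · exact Or.inl hcU
          · exact Or.inr ⟨_, hstep.1.1, hbU, hcb V hV hcV⟩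
      · exact Or.inr done
  rcases key q (h p hpY q hqY) with hqU | done
  · exact ⟨q, hqY, hqU, hqV⟩
  · exact done

lemma preconnected_zigzag [Finite X] (t : TopologicalSpace X) (Y : Set X)
    (h : @IsPreconnected X t Y) :
    ∀ x ∈ Y, ∀ y ∈ Y, Relation.ReflTransGen
      (fun u v => (u ∈ Y ∧ v ∈ Y) ∧ (leT t u v ∨ leT t v u)) x y := by
  letI := t
  intro x hx y hy
  by_contra hcon
  have hUo : IsOpen (⋃ w ∈ {w | w ∈ Y ∧ Relation.ReflTransGen
      (fun u v => (u ∈ Y ∧ v ∈ Y) ∧ (leT t u v ∨ leT t v u)) x w}, {z | leT t w z}) :=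
    isOpen_biUnion (fun w _ => minOpen t w)
  have hVo : IsOpen (⋃ w ∈ {w | w ∈ Y ∧ ¬ Relation.ReflTransGen
      (fun u v => (u ∈ Y ∧ v ∈ Y) ∧ (leT t u v ∨ leT t v u)) x w}, {z | leT t w z}) :=
    isOpen_biUnion (fun w _ => minOpen t w)
  have hcov : Y ⊆ (⋃ w ∈ {w | w ∈ Y ∧ Relation.ReflTransGen
      (fun u v => (u ∈ Y ∧ v ∈ Y) ∧ (leT t u v ∨ leT t v u)) x w}, {z | leT t w z}) ∪
      (⋃ w ∈ {w | w ∈ Y ∧ ¬ Relation.ReflTransGen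
      (fun u v => (u ∈ Y ∧ v ∈ Y) ∧ (leT t u v ∨ leT t v u)) x w}, {z | leT t w z}) := by
    intro z hz
    by_cases hzx : Relation.ReflTransGen
      (fun u v => (u ∈ Y ∧ v ∈ Y) ∧ (leT t u v ∨ leT t v u)) x z
    · exact Or.inl (Set.mem_biUnion ⟨hz, hzx⟩ (leT_refl t z))
    · exact Or.inr (Set.mem_biUnion ⟨hz, hzx⟩ (leT_refl t z))
  obtain ⟨z, hzY, hzU, hzV⟩ := h _ _ hUo hVo hcov
    ⟨x, hx, Set.mem_biUnion ⟨hx, Relation.ReflTransGen.refl⟩ (leT_refl t x)⟩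
    ⟨y, hy, Set.mem_biUnion ⟨hy, hcon⟩ (leT_refl t y)⟩
  simp only [Set.mem_iUnion, Set.mem_setOf_eq] at hzU hzV
  obtain ⟨w, ⟨hwY, hwx⟩, hwz⟩ := hzU
  obtain ⟨w', ⟨hw'Y, hw'x⟩, hw'z⟩ := hzV
  exact hw'x ((hwx.tail ⟨⟨hwY, hzY⟩, Or.inl hwz⟩).tail ⟨⟨hzY, hw'Y⟩, Or.inr hw'z⟩)

/-- Key step: an `a`-edge inside a `∼_{T'}`-class is a `b`-edge. -/
lemma claimB [Finite X] {t t' : TopologicalSpace X}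
    (hconn : ∀ Y : Set X, @IsConnected X t' Y → restrictT t' Y = restrictT t Y)
    {z w : X} (ha : leT t z w) (hb : quotRel t' t' z w) : leT t' z w := by
  have hzY : z ∈ {q | quotRel t' t' z q} := Relation.ReflTransGen.refl
  have hwY : w ∈ {q | quotRel t' t' z q} := hb
  have ann : ∀ q, quotRel t' t' z q → Relation.ReflTransGen
      (fun u v => (u ∈ {q | quotRel t' t' z q} ∧ v ∈ {q | quotRel t' t' z q}) ∧
        (leT t' u v ∨ leT t' v u)) z q := by
    intro q hq
    induction hq with
    | refl => exact .refl
    | tail hzb hstep ih => exact ih.tail ⟨⟨hzb, hzb.tail hstep⟩, hstep⟩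
  have hYzig : ∀ x ∈ {q | quotRel t' t' z q}, ∀ y ∈ {q | quotRel t' t' z q},
      Relation.ReflTransGen
      (fun u v => (u ∈ {q | quotRel t' t' z q} ∧ v ∈ {q | quotRel t' t' z q}) ∧
        (leT t' u v ∨ leT t' v u)) x y := by
    intro x hx y hy
    exact (rtg_symm (fun a b hab => ⟨⟨hab.1.2, hab.1.1⟩, hab.2.symm⟩) (ann x hx)).trans
      (ann y hy)
  have hYconn : @IsConnected X t' {q | quotRel t' t' z q} :=
    ⟨⟨z, hzY⟩, zigzag_preconnected t' _ hYzig⟩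
  exact (leT_iff_of_restrict_eq (hconn _ hYconn) ⟨z, hzY⟩ ⟨w, hwY⟩).mpr ha

/-- Key lemma: if `x R_{T/T''} y` and `x ∼ y` in the `T'`-equivalence,
then `x R_{T'/T''} y`. -/
lemma lemmaL [Finite X] {t t' t'' : TopologicalSpace X}
    (hconn : ∀ Y : Set X, @IsConnected X t' Y → restrictT t' Y = restrictT t Y)
    (hsym : ∀ x y : X, (quotRel t t' x y ∧ quotRel t t' y x) ↔
      (quotRel t' t' x y ∧ quotRel t' t' y x))
    (hcb : ∀ x y : X, leT t'' x y → leT t' x y)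
    (hba : ∀ x y : X, leT t' x y → leT t x y)
    {x y : X} (hR : quotRel t t'' x y) :
    quotRel t' t' x y → quotRel t' t'' x y := by
  induction hR with
  | refl => exact fun _ => .refl
  | @tail b c hxb hstep ih =>
    intro hE
    -- S-paths
    have Sxb : quotRel t t' x b :=
      rtg_le (fun u v huv => .single (huv.imp id (hcb v u))) x b hxb
    have Sbc : quotRel t t' b c := .single (hstep.imp id (hcb c b))
    have Scx : quotRel t t' c x :=
      rtg_le (fun u v huv => .single (huv.imp (hba u v) id)) c x
        (quotRel_self_symm t' hE)
    have Exb : quotRel t' t' x b := ((hsym x b).mp ⟨Sxb, Sbc.trans Scx⟩).1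
    have hxb' : quotRel t' t'' x b := ih Exb
    rcases hstep with ha | hc
    · have Ebc : quotRel t' t' b c := (quotRel_self_symm t' Exb).trans hE
      exact hxb'.tail (Or.inl (claimB hconn ha Ebc))
    · exact hxb'.tail (Or.inr hc)

/-- If T'' ⊚≺ T' ⊚≺ T then T'/T'' ⊚≺ T/T''. -/
theorem adm_quot [Finite X] (t t' t'' : TopologicalSpace X)
    (h1 : adm t'' t') (h2 : adm t' t) :
    adm (quotTop t' t'') (quotTop t t'') := by
  obtain ⟨h1f, h1c, h1s⟩ := h1
  obtain ⟨h2f, h2c, h2s⟩ := h2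
  have hcb : ∀ x y : X, leT t'' x y → leT t' x y := fun x y => leT_mono h1f
  have hba : ∀ x y : X, leT t' x y → leT t x y := fun x y => leT_mono h2f
  have inc : ∀ x y : X, quotRel t' t'' x y → quotRel t t'' x y :=
    rtg_le fun a b hab => .single (hab.imp (hba a b) id)
  have mapR't' : ∀ a b : X, quotRel t' t'' a b → quotRel t' t' a b :=
    rtg_le fun u v huv => .single (huv.imp id (hcb v u))
  have mapRtt' : ∀ a b : X, quotRel t t'' a b → quotRel t t' a b :=
    rtg_le fun u v huv => .single (huv.imp id (hcb v u))
  have rev1 : ∀ a b : X, quotRel t' t'' b a → quotRel t t' a b := by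
    intro a b h
    refine rtg_le ?_ a b (rtg_flip h)
    intro u v h'
    exact .single (h'.elim (fun g => Or.inr g) (fun g => Or.inl (hba _ _ (hcb _ _ g))))
  have rev2 : ∀ a b : X, quotRel t' t'' b a → quotRel t' t' a b := by
    intro a b h
    refine rtg_le ?_ a b (rtg_flip h)
    intro u v h'
    exact .single (h'.elim (fun g => Or.inr g) (fun g => Or.inl (hcb _ _ g)))
  have e1 : ∀ a b : X, quotRel (quotTop t t'') (quotTop t' t'') a b ↔ quotRel t t' a b := by
    intro a b
    constructor
    · refine rtg_le ?_ a b
      intro u v huv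
      exact huv.elim (fun h => mapRtt' u v ((leT_quotTop t t'' u v).mp h))
        (fun h => rev1 u v ((leT_quotTop t' t'' v u).mp h))
    · refine rtg_le ?_ a b
      intro u v huv
      exact huv.elim
        (fun g => .single (Or.inl ((leT_quotTop t t'' u v).mpr (.single (Or.inl g)))))
        (fun g => .single (Or.inr ((leT_quotTop t' t'' v u).mpr (.single (Or.inl g)))))
  have e2 : ∀ a b : X, quotRel (quotTop t' t'') (quotTop t' t'') a b ↔ quotRel t' t' a b := by
    intro a b
    constructor
    · refine rtg_le ?_ a b
      intro u v huv
      exact huv.elim (fun h => mapR't' u v ((leT_quotTop t' t'' u v).mp h))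
        (fun h => rev2 u v ((leT_quotTop t' t'' v u).mp h))
    · refine rtg_le ?_ a b
      intro u v huv
      exact huv.elim
        (fun g => .single (Or.inl ((leT_quotTop t' t'' u v).mpr (.single (Or.inl g)))))
        (fun g => .single (Or.inr ((leT_quotTop t' t'' v u).mpr (.single (Or.inl g)))))
  refine ⟨?_, ?_, ?_⟩
  · -- finer
    intro U hU
    intro a haU b hab
    exact hU a haU b (inc a b hab)
  · -- connected subsets
    intro Y hYconn
    have hzig := preconnected_zigzag (quotTop t' t'') Y hYconn.2
    have hEb : ∀ x ∈ Y, ∀ y ∈ Y, quotRel t' t' x y := by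
      intro x hx y hy
      refine rtg_le ?_ x y (hzig x hx y hy)
      rintro u v ⟨⟨huY, hvY⟩, huv | hvu⟩
      · exact mapR't' u v ((leT_quotTop t' t'' u v).mp huv)
      · exact quotRel_self_symm t' (mapR't' v u ((leT_quotTop t' t'' v u).mp hvu))
    apply restrict_eq_of_leT
    intro u w
    rw [leT_quotTop, leT_quotTop]
    constructor
    · exact inc _ _
    · intro h
      exact lemmaL h2c h2s hcb hba h (hEb u u.2 w w.2)
  · -- sim condition
    intro x y
    rw [e1, e1, e2, e2]
    exact h2s x y
end

section
/- Let T and T'' be topologies on a finite set X with T'' ⊚≺ T. Then the map T' ↦ T'/T'' is a bijection from the set of topologies T' on X with T'' ⊚≺ T' ⊚≺ T onto the set of topologies U on X with U ⊚≺ T/T''. -/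
variable {X : Type*}

/-!
On a finite set a topology is determined by its specialization preorder, so the theorem is a
statement about preorders: `T' ⊚≺ T` says that `≤_{T'} ⊆ ≤_T`, that `≤_{T'}` and `≤_T` agree
inside each class of the equivalence generated by `≤_{T'}` (the connected components of `T'`),
and that the cycles of `≤_{T/T'}` stay inside those classes.

The map `T' ↦ T'/T''` is injective because `≤_{T'} = ≤_T ∩ ≤_{T'/T''}`, and a preimage of
`U ⊚≺ T/T''` is the topology `T ⊓ U` generated by `T` and `U`. Everything rests on one
observation: if a `T/T''`-chain runs from `x` to `y` and `y` can return to `x`, every `≤_T`-step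
of the chain lies on a cycle, so admissibility turns it into a step of the finer order.
-/

open Relation Set Topology

namespace Relation

variable {a b c v : X → X → Prop} {x y : X}

def QuotGen (ρ σ : X → X → Prop) : X → X → Prop :=
  ReflTransGen fun x y => ρ x y ∨ σ y x

instance : IsPreorder X (QuotGen a c) :=
  inferInstanceAs (IsPreorder X (ReflTransGen _))

structure Admissible (σ ρ : X → X → Prop) : Prop where
  le : σ ≤ ρ
  of_eqvGen ⦃x y : X⦄ : EqvGen σ x y → ρ x y → σ x y
  eqvGen_of_quotGen ⦃x y : X⦄ : QuotGen ρ σ x y → QuotGen ρ σ y x → EqvGen σ x y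

lemma quotGen_mono {a' c' : X → X → Prop} (ha : a ≤ a') (hc : c ≤ c') :
    QuotGen a c ≤ QuotGen a' c' :=
  ReflTransGen.mono fun _ _ => Or.imp (ha _ _) (hc _ _)

lemma quotGen_swap : QuotGen a c x y ↔ QuotGen c a y x := by
  rw [QuotGen, QuotGen, ← reflTransGen_swap]
  simp only [or_comm]

lemma le_quotGen : a ≤ QuotGen a c := fun _ _ h => .single (.inl h)

lemma quotGen_le {M : X → X → Prop} [IsPreorder X M] (ha : a ≤ M) (hc : ∀ x y, c x y → M y x) :
    QuotGen a c ≤ M :=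
  (ReflTransGen.mono fun x y h => h.elim (ha x y) (hc y x)).trans reflTransGen_eq_self.le

lemma eqvGen_le_quotGen (h : c ≤ a) : EqvGen c ≤ QuotGen a c := by
  rw [← EqvGen.reflTransGen_symmGen]
  exact ReflTransGen.mono fun x y => Or.imp_left (h x y)

lemma quotGen_le_eqvGen (h : c ≤ b) : QuotGen b c ≤ EqvGen b :=
  quotGen_le (fun x y => .rel x y) fun x y hc => .symm _ _ (.rel _ _ (h x y hc))

lemma eqvGen_quotGen (h : c ≤ b) : EqvGen (QuotGen b c) = EqvGen b :=
  le_antisymm (EqvGen.eqvGen_le (quotGen_le_eqvGen h)) (EqvGen.eqvGen_mono le_quotGen)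

/-- Each `a`-step `z → w` of the chain closes up to an `M`-cycle `w → y → x → z`. -/
lemma quotGen_of_cycle {M : X → X → Prop} [IsTrans X M] (hM : QuotGen a c ≤ M) (hyx : M y x)
    (hstep : ∀ ⦃z w⦄, a z w → M w z → b z w) (h : QuotGen a c x y) : QuotGen b c x y := by
  suffices ∀ p, QuotGen a c p y → M x p → QuotGen b c p y from
    this x h (_root_.trans (hM _ _ h) hyx)
  intro p hp
  induction hp using ReflTransGen.head_induction_on with
  | refl => exact fun _ => .refl
  | @head z w hzw hwy ih =>
    intro hxz
    have hwz : M w z := _root_.trans (_root_.trans (hM _ _ hwy) hyx) hxz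
    exact .head (hzw.imp_left fun ha => hstep ha hwz) (ih (_root_.trans hxz (hM _ _ (.single hzw))))

namespace Admissible

lemma quotGen_of_eqvGen (hba : Admissible b a) (hcb : c ≤ b) (hE : EqvGen b x y)
    (h : QuotGen a c x y) : QuotGen b c x y :=
  quotGen_of_cycle (quotGen_mono le_rfl hcb) (eqvGen_le_quotGen hba.le _ _ (_root_.symm hE))
    (fun _ _ ha hwz => hba.of_eqvGen (hba.eqvGen_of_quotGen (le_quotGen _ _ ha) hwz) ha) h

protected lemma quotGen (hba : Admissible b a) (hcb : c ≤ b) :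
    Admissible (QuotGen b c) (QuotGen a c) where
  le := quotGen_mono hba.le le_rfl
  of_eqvGen _ _ hE h := hba.quotGen_of_eqvGen hcb (eqvGen_quotGen hcb ▸ hE) h
  eqvGen_of_quotGen x y hxy hyx := by
    have hle : QuotGen (QuotGen a c) (QuotGen b c) ≤ QuotGen a b :=
      quotGen_le (quotGen_mono le_rfl hcb) fun _ _ h =>
        quotGen_mono (hcb.trans hba.le) le_rfl _ _ (quotGen_swap.1 h)
    rw [eqvGen_quotGen hcb]
    exact hba.eqvGen_of_quotGen (hle _ _ hxy) (hle _ _ hyx)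

lemma eq_inf_quotGen (hba : Admissible b a) (hcb : c ≤ b) : b = a ⊓ QuotGen b c := by
  ext x y
  exact ⟨fun h => ⟨hba.le _ _ h, le_quotGen _ _ h⟩,
    fun ⟨ha, hq⟩ => hba.of_eqvGen (quotGen_le_eqvGen hcb _ _ hq) ha⟩

end Admissible

lemma eqvGen_le_of_admissible_quotGen (hca : c ≤ a) (hv : Admissible v (QuotGen a c)) :
    EqvGen c ≤ v := fun _ _ h =>
  have hxy := eqvGen_le_quotGen hca _ _ h
  hv.of_eqvGen (hv.eqvGen_of_quotGen (le_quotGen _ _ hxy)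
    (le_quotGen _ _ (eqvGen_le_quotGen hca _ _ (_root_.symm h)))) hxy

lemma le_inf_of_admissible_quotGen (hca : c ≤ a) (hv : Admissible v (QuotGen a c)) :
    c ≤ a ⊓ v := fun x y h =>
  ⟨hca x y h, eqvGen_le_of_admissible_quotGen hca hv _ _ (.rel _ _ h)⟩

lemma quotGen_inf_eq [IsPreorder X v] (hca : c ≤ a) (hv : Admissible v (QuotGen a c)) :
    QuotGen (a ⊓ v) c = v := by
  refine le_antisymm (quotGen_le inf_le_right fun x y h =>
    eqvGen_le_of_admissible_quotGen hca hv _ _ (.symm _ _ (.rel _ _ h))) fun x y hxy => ?_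
  refine quotGen_of_cycle le_quotGen (.single (.inr hxy)) (fun z w ha hwz => ⟨ha, ?_⟩)
    (hv.le _ _ hxy)
  have hzw : QuotGen a c z w := le_quotGen _ _ ha
  exact hv.of_eqvGen (hv.eqvGen_of_quotGen (le_quotGen _ _ hzw) hwz) hzw

lemma Admissible.inf_of_quotGen [IsPreorder X v] (hca : Admissible c a)
    (hv : Admissible v (QuotGen a c)) : Admissible c (a ⊓ v) where
  le := le_inf_of_admissible_quotGen hca.le hv
  of_eqvGen _ _ hE h := hca.of_eqvGen hE h.1
  eqvGen_of_quotGen _ _ hxy hyx := by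
    rw [quotGen_inf_eq hca.le hv] at hxy hyx
    exact hca.eqvGen_of_quotGen (hv.le _ _ hxy) (hv.le _ _ hyx)

lemma inf_admissible_of_quotGen [IsPreorder X v] (hca : c ≤ a) (hv : Admissible v (QuotGen a c)) :
    Admissible (a ⊓ v) a where
  le := inf_le_left
  of_eqvGen _ _ hE ha :=
    ⟨ha, hv.of_eqvGen (EqvGen.eqvGen_mono inf_le_right _ _ hE) (le_quotGen _ _ ha)⟩
  eqvGen_of_quotGen x y hxy hyx := by
    have hle : QuotGen a (a ⊓ v) ≤ QuotGen (QuotGen a c) v := quotGen_mono le_quotGen inf_le_right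
    have hvE : v ≤ EqvGen (a ⊓ v) := (quotGen_inf_eq hca hv).symm.le.trans
      (quotGen_le_eqvGen (le_inf_of_admissible_quotGen hca hv))
    exact EqvGen.eqvGen_le hvE _ _ (hv.eqvGen_of_quotGen (hle _ _ hxy) (hle _ _ hyx))

end Relation

section Specialization

variable {t t' u : TopologicalSpace X} {x y : X}

instance (t : TopologicalSpace X) : IsPreorder X (leT t) where
  refl _ _ _ := id
  trans _ _ _ hxy hyz U hU hx := hyz U hU (hxy U hU hx)

lemma leT_iff_specializes : leT t x y ↔ @Specializes X t y x :=
  (@specializes_iff_forall_open X t y x).symm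

lemma leT_mono_s12 (h : t' ≤ t) : leT t' ≤ leT t := fun _ _ hxy U hU => hxy U (h U hU)

lemma leT_inf : leT (t ⊓ u) = leT t ⊓ leT u := by
  refine le_antisymm (le_inf (leT_mono_s12 inf_le_left) (leT_mono_s12 inf_le_right)) fun x y hxy => ?_
  refine leT_iff_specializes.2 ?_
  change @nhds X (t ⊓ u) y ≤ @nhds X (t ⊓ u) x
  rw [nhds_inf (t₁ := t) (t₂ := u), nhds_inf (t₁ := t) (t₂ := u)]
  exact inf_le_inf (leT_iff_specializes.1 hxy.1) (leT_iff_specializes.1 hxy.2)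

lemma leT_topOfRel_s12 (r : X → X → Prop) : leT (topOfRel r) = ReflTransGen r := by
  ext x y
  refine ⟨fun h => h {z | ReflTransGen r x z} (fun _ hz _ h => hz.tail h) .refl,
    fun h U hU hx => ?_⟩
  induction h with
  | refl => exact hx
  | tail _ hyz ih => exact hU _ ih _ hyz

lemma topOfRel_leT [Finite X] (t : TopologicalSpace X) : topOfRel (leT t) = t := by
  ext U
  rw [@isOpen_iff_forall_specializes X t]
  simp only [← leT_iff_specializes]
  exact ⟨fun h x y hyx hx => h y hx x hyx, fun h x hx y hxy => h y x hxy hx⟩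

lemma leT_injective [Finite X] : Function.Injective (leT : TopologicalSpace X → _) :=
  fun t u h => by rw [← topOfRel_leT t, h, topOfRel_leT]

lemma finer_iff_leT_le [Finite X] : finer t' t ↔ leT t' ≤ leT t := by
  refine ⟨fun h x y hxy U hU => hxy U (h U hU), fun h U hU => ?_⟩
  rw [← topOfRel_leT t']
  exact fun x hx y hxy => h x y hxy U hU hx

lemma leT_restrictT {Y : Set X} {x y : Y} : leT (restrictT t Y) x y ↔ leT t x y := by
  refine ⟨fun h U hU => h _ ⟨U, hU, rfl⟩, ?_⟩
  rintro h _ ⟨U, hU, rfl⟩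
  exact h U hU

lemma leT_quotTop_s12 : leT (quotTop t t') = QuotGen (leT t) (leT t') := by
  rw [quotTop, leT_topOfRel_s12]
  exact reflTransGen_eq_self (r := QuotGen (leT t) (leT t'))

lemma quotRel_self : quotRel t t = EqvGen (leT t) :=
  EqvGen.reflTransGen_symmGen _

lemma eqvGen_leT_iff_mem_connectedComponent [Finite X] :
    EqvGen (leT t) x y ↔ y ∈ @connectedComponent X t x := by
  constructor
  · intro h
    suffices connectedComponent x = connectedComponent y from this ▸ mem_connectedComponent
    induction h with
    | rel z w hzw =>
      exact (connectedComponent_eq ((leT_iff_specializes.1 hzw).mem_closed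
        isClosed_connectedComponent mem_connectedComponent)).symm
    | refl => rfl
    | symm _ _ _ ih => exact ih.symm
    | trans _ _ _ _ _ ih₁ ih₂ => exact ih₁.trans ih₂
  · intro hy
    have hclopen : IsClopen {z | EqvGen (leT t) x z} := by
      refine ⟨isOpen_compl_iff.1 (isOpen_iff_forall_specializes.2 fun z w hzw hw hz => hw ?_),
        isOpen_iff_forall_specializes.2 fun z w hzw hw => ?_⟩
      · exact .trans _ _ _ hz (.symm _ _ (.rel _ _ (leT_iff_specializes.2 hzw)))
      · exact .trans _ _ _ hw (.rel _ _ (leT_iff_specializes.2 hzw))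
    exact hclopen.connectedComponent_subset (.refl x) hy

end Specialization

lemma adm_iff_admissible [Finite X] {s t : TopologicalSpace X} :
    adm s t ↔ Admissible (leT s) (leT t) := by
  rw [adm, finer_iff_leT_le, quotRel_self]
  refine ⟨fun ⟨hle, hcon, hcyc⟩ => ⟨hle, fun x y hE hxy => ?_, fun x y hxy hyx => ?_⟩,
    fun hst => ⟨hst.le, fun Y hY => ?_, fun x y => ?_⟩⟩
  · have hY := @isConnected_connectedComponent X s x
    have hres : leT (restrictT s _) ⟨x, @mem_connectedComponent X s x⟩
        ⟨y, eqvGen_leT_iff_mem_connectedComponent.1 hE⟩ := by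
      rw [hcon _ hY]
      exact leT_restrictT.2 hxy
    exact leT_restrictT.1 hres
  · exact ((hcyc x y).1 ⟨hxy, hyx⟩).1
  · refine leT_injective (funext₂ fun u w => propext ?_)
    rw [leT_restrictT, leT_restrictT]
    refine ⟨hst.le _ _, hst.of_eqvGen (eqvGen_leT_iff_mem_connectedComponent.2 ?_)⟩
    exact @IsPreconnected.subset_connectedComponent X s u Y hY.2 u.2 w w.2
  · exact ⟨fun ⟨hxy, hyx⟩ => ⟨hst.eqvGen_of_quotGen hxy hyx, hst.eqvGen_of_quotGen hyx hxy⟩,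
      fun ⟨hxy, hyx⟩ => ⟨eqvGen_le_quotGen hst.le _ _ hxy, eqvGen_le_quotGen hst.le _ _ hyx⟩⟩

/-- For T'' ⊚≺ T, the map T' ↦ T'/T'' is a bijection from
{T' | T'' ⊚≺ T' ⊚≺ T} onto {U | U ⊚≺ T/T''}. -/
theorem quot_bijection [Finite X] (t t'' : TopologicalSpace X) (h : adm t'' t) :
    Set.BijOn (fun t' => quotTop t' t'')
      {t' : TopologicalSpace X | adm t'' t' ∧ adm t' t}
      {u : TopologicalSpace X | adm u (quotTop t t'')} := by
  simp only [adm_iff_admissible, leT_quotTop_s12] at h ⊢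
  refine ⟨fun t' ⟨h'', h'⟩ => ?_, fun t₁ ⟨h₁'', h₁⟩ t₂ ⟨h₂'', h₂⟩ heq => ?_, fun u hu => ?_⟩
  · simpa only [mem_ofPred_eq, leT_quotTop_s12] using h'.quotGen h''.le
  · apply leT_injective
    rw [h₁.eq_inf_quotGen h₁''.le, h₂.eq_inf_quotGen h₂''.le, ← leT_quotTop_s12, ← leT_quotTop_s12]
    exact congrArg (leT t ⊓ leT ·) heq
  · refine ⟨t ⊓ u, ?_, leT_injective ?_⟩ <;> simp only [mem_ofPred_eq, leT_quotTop_s12, leT_inf]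
    · exact ⟨h.inf_of_quotGen hu, inf_admissible_of_quotGen h.le hu⟩
    · exact quotGen_inf_eq h.le hu
end
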